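/- Let p ≥ 2 be a natural number, let A ∈ ℝ^{p×p} be symmetric positive semidefinite and let Ω ∈ ℝ^{p×p} be symmetric positive definite. For γ ∈ ℝ^{p−1} let x(γ) ∈ ℝ^p denote the vector (1, −γ₁, …, −γ_{p−1})ᵀ. Then the infimum over γ ∈ ℝ^{p−1} of the ratio (x(γ)ᵀ A x(γ)) / (x(γ)ᵀ Ω x(γ)) equals the smallest eigenvalue of the symmetric positive semidefinite matrix Ω^{-1/2} A Ω^{-1/2}. -/

import Mathlib

/-!
Write `W = S * S` with `S = √W` symmetric and invertible, and put `M = S⁻¹ * A * S⁻¹`. The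
substitution `y = S x` turns `xᵀ A x / xᵀ W x` into the ordinary Rayleigh quotient
`yᵀ M y / yᵀ y`, which is bounded below by the least eigenvalue of `M` and attains it at an
eigenvector. Up to scaling, the vectors `x(γ)` are exactly the vectors with nonzero first
coordinate; these are dense, and the quotient is scale-invariant and continuous wherever its
denominator is nonzero, so the infimum over `γ` is the infimum over all `x ≠ 0`.
-/

open Matrix

/-- Inverse of the unique symmetric positive semidefinite square root of a positive
(semi)definite real matrix (junk value `0` if `P` is not positive semidefinite). -/
noncomputable def invSqrt {n : Type*} [Fintype n] [DecidableEq n]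
    (P : Matrix n n ℝ) : Matrix n n ℝ := by
  classical exact if h : P.PosSemidef then
    ((h.1.eigenvectorUnitary : Matrix n n ℝ) *
      diagonal ((↑) ∘ Real.sqrt ∘ h.1.eigenvalues) *
      (star (h.1.eigenvectorUnitary : Matrix n n ℝ)))⁻¹ else 0

/-- `sortedEigs S j` is the `j`-th largest eigenvalue (0-indexed, decreasing order, with
multiplicity) of a real symmetric matrix `S` (junk value `0` if `S` is not symmetric);
the smallest eigenvalue of an `n × n` symmetric matrix is `sortedEigs S ⟨n - 1, _⟩`. -/
noncomputable def sortedEigs {m : Type*} [Fintype m] [DecidableEq m]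
    (S : Matrix m m ℝ) (j : Fin (Fintype.card m)) : ℝ := by
  classical
  exact if hS : S.IsHermitian then
    ((Finset.univ.val.map hS.eigenvalues).sort (· ≤ ·)).get
      ⟨Fintype.card m - 1 - j, by
        have hl : ((Finset.univ.val.map hS.eigenvalues).sort (· ≤ ·)).length
            = Fintype.card m := by simp
        rw [hl]; have := j.isLt; omega⟩
  else 0

namespace Matrix

variable {ι : Type*} [Fintype ι]

noncomputable def genRayleighQuotient (A W : Matrix ι ι ℝ) (x : ι → ℝ) : ℝ :=
  (x ⬝ᵥ (A *ᵥ x)) / (x ⬝ᵥ (W *ᵥ x))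

lemma smul_dotProduct_mulVec_smul {R : Type*} [CommSemiring R] (B : Matrix ι ι R) (a : R)
    (x : ι → R) : (a • x) ⬝ᵥ B *ᵥ (a • x) = a ^ 2 * (x ⬝ᵥ B *ᵥ x) := by
  rw [mulVec_smul, dotProduct_smul, smul_dotProduct, smul_eq_mul, smul_eq_mul, ← mul_assoc, sq]

lemma mulVec_dotProduct_mulVec_mulVec {R : Type*} [CommSemiring R] (S B : Matrix ι ι R)
    (x : ι → R) : (S *ᵥ x) ⬝ᵥ B *ᵥ (S *ᵥ x) = x ⬝ᵥ (Sᵀ * B * S) *ᵥ x := by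
  rw [mul_assoc, ← mulVec_mulVec, dotProduct_mulVec x Sᵀ, vecMul_transpose, mulVec_mulVec]

lemma dotProduct_self_pos {x : ι → ℝ} (hx : x ≠ 0) : 0 < x ⬝ᵥ x := by
  simpa using dotProduct_star_self_pos_iff.mpr hx

lemma genRayleighQuotient_smul (A W : Matrix ι ι ℝ) {a : ℝ} (ha : a ≠ 0) (x : ι → ℝ) :
    genRayleighQuotient A W (a • x) = genRayleighQuotient A W x := by
  simp only [genRayleighQuotient, smul_dotProduct_mulVec_smul]
  exact mul_div_mul_left _ _ (pow_ne_zero 2 ha)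

lemma genRayleighQuotient_mem_closure_image (A W : Matrix ι ι ℝ) (i : ι) {x : ι → ℝ}
    (hx : x ⬝ᵥ W *ᵥ x ≠ 0) :
    genRayleighQuotient A W x ∈ closure (genRayleighQuotient A W '' {u | u i ≠ 0}) := by
  have hquad (B : Matrix ι ι ℝ) : Continuous fun u : ι → ℝ => u ⬝ᵥ B *ᵥ u :=
    continuous_id.dotProduct (continuous_const.matrix_mulVec continuous_id)
  have hdense : Dense {u : ι → ℝ | u i ≠ 0} :=
    (dense_compl_singleton (0 : ℝ)).preimage (isOpenMap_eval i)
  exact mem_closure_image (((hquad A).continuousAt).div (hquad W).continuousAt hx)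
    (hdense.closure_eq ▸ Set.mem_univ x)

lemma genRayleighQuotient_mem_range_vecCons {n : ℕ} (A W : Matrix (Fin (n + 1)) (Fin (n + 1)) ℝ)
    {u : Fin (n + 1) → ℝ} (hu : u 0 ≠ 0) :
    genRayleighQuotient A W u ∈
      Set.range fun γ : Fin n → ℝ => genRayleighQuotient A W (vecCons 1 (-γ)) := by
  refine ⟨-((u 0)⁻¹ • vecTail u), ?_⟩
  have hcons : vecCons 1 ((u 0)⁻¹ • vecTail u) = (u 0)⁻¹ • u := by
    rw [← inv_mul_cancel₀ hu, ← smul_eq_mul, ← smul_cons]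
    exact congrArg _ (cons_head_tail u)
  simp only [neg_neg, hcons, genRayleighQuotient_smul A W (inv_ne_zero hu)]

variable [DecidableEq ι]

lemma genRayleighQuotient_transpose_mul_mul (M S : Matrix ι ι ℝ) (x : ι → ℝ) :
    genRayleighQuotient (Sᵀ * M * S) (Sᵀ * S) x = genRayleighQuotient M 1 (S *ᵥ x) := by
  rw [genRayleighQuotient, genRayleighQuotient, mulVec_dotProduct_mulVec_mulVec,
    mulVec_dotProduct_mulVec_mulVec, mul_one]

namespace IsHermitian

variable {M : Matrix ι ι ℝ} (hM : M.IsHermitian)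
include hM

lemma ofLp_eigenvectorBasis_ne_zero (i : ι) : (hM.eigenvectorBasis i : ι → ℝ) ≠ 0 :=
  (WithLp.ofLp_eq_zero 2).ne.2 (hM.eigenvectorBasis.orthonormal.ne_zero i)

lemma le_genRayleighQuotient_one {c : ℝ} (hc : ∀ i, c ≤ hM.eigenvalues i) {x : ι → ℝ}
    (hx : x ≠ 0) : c ≤ genRayleighQuotient M 1 x := by
  have hshift : (M - c • 1).PosSemidef := by
    open MatrixOrder in
    rw [← nonneg_iff_posSemidef]
    have hcfc : M - c • 1 = cfc (fun x => x - c) M := by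
      rw [cfc_sub _ _ M, cfc_id' ℝ M, cfc_const c M, Algebra.algebraMap_eq_smul_one]
    rw [hcfc]
    refine cfc_nonneg fun x hx => ?_
    obtain ⟨i, rfl⟩ := hM.spectrum_real_eq_range_eigenvalues ▸ hx
    exact sub_nonneg.mpr (hc i)
  have hquad := hshift.dotProduct_mulVec_nonneg x
  rw [star_trivial, sub_mulVec, dotProduct_sub, smul_mulVec, one_mulVec, dotProduct_smul,
    smul_eq_mul, sub_nonneg] at hquad
  rwa [genRayleighQuotient, one_mulVec, le_div_iff₀ (dotProduct_self_pos hx)]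

lemma genRayleighQuotient_one_eigenvectorBasis (i : ι) :
    genRayleighQuotient M 1 (hM.eigenvectorBasis i) = hM.eigenvalues i := by
  rw [genRayleighQuotient, one_mulVec, hM.mulVec_eigenvectorBasis i, dotProduct_smul,
    smul_eq_mul, mul_div_assoc,
    div_self (dotProduct_self_pos (hM.ofLp_eigenvectorBasis_ne_zero i)).ne', mul_one]

variable {S : Matrix ι ι ℝ}

lemma le_genRayleighQuotient {c : ℝ} (hc : ∀ i, c ≤ hM.eigenvalues i) (hS : IsUnit S)
    {x : ι → ℝ} (hx : x ≠ 0) : c ≤ genRayleighQuotient (Sᵀ * M * S) (Sᵀ * S) x := by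
  rw [genRayleighQuotient_transpose_mul_mul]
  refine hM.le_genRayleighQuotient_one hc fun hSx => hx ?_
  exact mulVec_injective_iff_isUnit.mpr hS (hSx.trans (mulVec_zero S).symm)

lemma exists_genRayleighQuotient_eq_eigenvalues (hS : IsUnit S) (i : ι) :
    ∃ x ≠ 0, genRayleighQuotient (Sᵀ * M * S) (Sᵀ * S) x = hM.eigenvalues i := by
  have hSx : S *ᵥ (S⁻¹ *ᵥ hM.eigenvectorBasis i) = hM.eigenvectorBasis i := by
    rw [mulVec_mulVec, mul_nonsing_inv _ ((isUnit_iff_isUnit_det S).mp hS), one_mulVec]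
  refine ⟨S⁻¹ *ᵥ hM.eigenvectorBasis i, fun h => ?_, ?_⟩
  · exact hM.ofLp_eigenvectorBasis_ne_zero i (by rw [← hSx, h, mulVec_zero])
  · rw [genRayleighQuotient_transpose_mul_mul, hSx, hM.genRayleighQuotient_one_eigenvectorBasis]

end IsHermitian

end Matrix

section

variable {ι : Type*} [Fintype ι] [DecidableEq ι] {W : Matrix ι ι ℝ}

lemma transpose_cfc (f : ℝ → ℝ) (W : Matrix ι ι ℝ) : (cfc f W)ᵀ = cfc f W :=
  (cfc_predicate f W : IsSelfAdjoint (cfc f W))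

lemma invSqrt_eq_inv_cfc_sqrt (hW : W.PosSemidef) : invSqrt W = (cfc Real.sqrt W)⁻¹ := by
  rw [invSqrt, dif_pos hW, hW.1.cfc_eq, IsHermitian.cfc, Unitary.conjStarAlgAut_apply]
  rfl

lemma transpose_cfc_sqrt_mul_self (hW : W.PosSemidef) :
    (cfc Real.sqrt W)ᵀ * cfc Real.sqrt W = W := by
  rw [transpose_cfc, ← cfc_mul Real.sqrt Real.sqrt W]
  conv_rhs => rw [← cfc_id' ℝ W hW.1]
  refine cfc_congr fun x hx => Real.mul_self_sqrt ?_
  obtain ⟨i, rfl⟩ := hW.1.spectrum_real_eq_range_eigenvalues ▸ hx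
  exact hW.eigenvalues_nonneg i

lemma isUnit_cfc_sqrt (hW : W.PosDef) : IsUnit (cfc Real.sqrt W) :=
  isUnit_of_mul_isUnit_right (transpose_cfc_sqrt_mul_self hW.posSemidef ▸ hW.isUnit)

lemma isHermitian_invSqrt_mul_mul (hW : W.PosSemidef) {A : Matrix ι ι ℝ} (hA : A.IsHermitian) :
    (invSqrt W * A * invSqrt W).IsHermitian := by
  have hinv : (invSqrt W)ᴴ = invSqrt W := by
    rw [invSqrt_eq_inv_cfc_sqrt hW, conjTranspose_nonsing_inv,
      conjTranspose_eq_transpose_of_trivial, transpose_cfc]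
  simpa only [hinv] using isHermitian_conjTranspose_mul_mul (invSqrt W) hA

lemma transpose_cfc_sqrt_mul_invSqrt_mul_mul (hW : W.PosDef) (A : Matrix ι ι ℝ) :
    (cfc Real.sqrt W)ᵀ * (invSqrt W * A * invSqrt W) * cfc Real.sqrt W = A := by
  have hdet := (isUnit_iff_isUnit_det _).mp (isUnit_cfc_sqrt hW)
  rw [invSqrt_eq_inv_cfc_sqrt hW.posSemidef, transpose_cfc, mul_assoc,
    nonsing_inv_mul_cancel_right _ _ hdet, mul_nonsing_inv_cancel_left _ _ hdet]

end

lemma sortedEigs_isLeast {m : Type*} [Fintype m] [DecidableEq m] {S : Matrix m m ℝ}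
    (hS : S.IsHermitian) (j : Fin (Fintype.card m)) (hj : (j : ℕ) + 1 = Fintype.card m) :
    IsLeast (Set.range hS.eigenvalues) (sortedEigs S j) := by
  have hmem (a : ℝ) : a ∈ (Finset.univ.val.map hS.eigenvalues).sort (· ≤ ·) ↔
      a ∈ Set.range hS.eigenvalues := by
    simp [Multiset.mem_sort]
  rw [sortedEigs, dif_pos hS]
  refine ⟨(hmem _).mp (List.get_mem _ _), ?_⟩
  rintro _ ⟨i, rfl⟩
  obtain ⟨k, hk⟩ := List.get_of_mem ((hmem _).mpr ⟨i, rfl⟩)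
  rw [← hk]
  exact (Multiset.pairwise_sort _ _).rel_get_of_le (by simp only [Fin.le_def]; omega)

/-- with `p = n + 1 ≥ 2`: the infimum over `γ ∈ ℝ^{p-1}` of
`x(γ)ᵀ A x(γ) / x(γ)ᵀ Ω x(γ)` with `x(γ) = (1, -γ)ᵀ` equals the smallest eigenvalue
of `Ω^{-1/2} A Ω^{-1/2}`. -/
theorem stmt_12 (n : ℕ)
    (A W : Matrix (Fin (n + 1)) (Fin (n + 1)) ℝ)
    (hA : A.PosSemidef) (hW : W.PosDef) :
    ⨅ γ : Fin n → ℝ,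
        (Matrix.vecCons 1 (-γ) ⬝ᵥ (A *ᵥ Matrix.vecCons 1 (-γ))) /
          (Matrix.vecCons 1 (-γ) ⬝ᵥ (W *ᵥ Matrix.vecCons 1 (-γ)))
      = sortedEigs (invSqrt W * A * invSqrt W)
          ⟨n, by simp only [Fintype.card_fin]; omega⟩ := by
  set S := cfc Real.sqrt W
  set M := invSqrt W * A * invSqrt W
  have hS : IsUnit S := isUnit_cfc_sqrt hW
  have hSS : Sᵀ * S = W := transpose_cfc_sqrt_mul_self hW.posSemidef
  have hSMS : Sᵀ * M * S = A := transpose_cfc_sqrt_mul_invSqrt_mul_mul hW A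
  have hM : M.IsHermitian := isHermitian_invSqrt_mul_mul hW.posSemidef hA.1
  obtain ⟨⟨i, hi⟩, hlow⟩ := sortedEigs_isLeast hM ⟨n, by simp⟩ (by simp)
  change ⨅ γ : Fin n → ℝ, genRayleighQuotient A W (vecCons 1 (-γ)) = _
  refine (isGLB_of_mem_closure ?_ ?_).ciInf_eq
  · rintro _ ⟨γ, rfl⟩
    rw [← hSMS, ← hSS]
    exact hM.le_genRayleighQuotient (fun j => hlow ⟨j, rfl⟩) hS (by simp)
  · obtain ⟨x, hx, hxi⟩ := hM.exists_genRayleighQuotient_eq_eigenvalues hS i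
    rw [hSMS, hSS] at hxi
    rw [← hi, ← hxi]
    refine closure_mono (Set.image_subset_iff.mpr fun u hu => ?_)
      (genRayleighQuotient_mem_closure_image A W 0 (hW.dotProduct_mulVec_pos hx).ne')
    exact genRayleighQuotient_mem_range_vecCons A W hu
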